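/- arXiv:1909.00882 — 7 statements merged into one kernel-verified Lean document; each statement's English description precedes it below -/
import Mathlib

section
/- Let C > 1, let n ≥ 2, and let c₁,…,c_n be real visit counts with 1 ≤ c_i ≤ C for all i. Define H* = log(n−1) − (log C)/(C−1) + log((log C)/(C−1)) + 1, and set E₁ = log((n−1)/(n−1+C)) + (C/(n−1+C))·log C, E₂ = log(n/(n+C)) + (C/(n+C))·log C, E₃ = log(1 + exp(−H*)). Then for any added count a with 1 ≤ a ≤ C, |H(c₁,…,c_n,a) − H(c₁,…,c_n)| ≤ max{E₁, E₂, E₃}, and for any index j, |H of the counts with c_j removed − H(c₁,…,c_n)| ≤ max{E₁, E₂, E₃}. -/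
/-- Location entropy of `n` visit counts `c`. -/
noncomputable def locEnt (n : ℕ) (c : Fin n → ℝ) : ℝ :=
  -∑ i, (c i / ∑ j, c j) * Real.log (c i / ∑ j, c j)

/-- Entropy as `log S - (∑ dᵢ log dᵢ)/S`. -/
lemma LS_entropy_eq (k : ℕ) (d : Fin k → ℝ) (hd : ∀ i, 0 < d i)
    (hS : 0 < ∑ i, d i) :
    locEnt k d = Real.log (∑ i, d i) - (∑ i, d i * Real.log (d i)) / (∑ i, d i) := by
  have hS' : (∑ i, d i) ≠ 0 := ne_of_gt hS
  have hterm : ∀ i : Fin k, (d i / ∑ j, d j) * Real.log (d i / ∑ j, d j)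
      = (d i * Real.log (d i)) / (∑ j, d j)
        - (Real.log (∑ j, d j) / (∑ j, d j)) * d i := by
    intro i
    rw [Real.log_div (ne_of_gt (hd i)) hS']
    field_simp
  unfold locEnt
  rw [Finset.sum_congr rfl fun i _ => hterm i, Finset.sum_sub_distrib,
    ← Finset.sum_div, ← Finset.mul_sum]
  field_simp
  ring

lemma LS_entropy_le (k : ℕ) (hk : 1 ≤ k) (d : Fin k → ℝ) (hd : ∀ i, 0 < d i) :
    locEnt k d ≤ Real.log k := by
  have hk0 : (0:ℝ) < (k:ℝ) := by exact_mod_cast hk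
  have hS : 0 < ∑ i, d i :=
    Finset.sum_pos (fun i _ => hd i) ⟨⟨0, hk⟩, Finset.mem_univ _⟩
  have key : ∀ i : Fin k, d i / (∑ j, d j) - 1/(k:ℝ)
      ≤ (d i / (∑ j, d j)) * Real.log (k:ℝ)
        + (d i / (∑ j, d j)) * Real.log (d i / (∑ j, d j)) := by
    intro i
    have hp0 : 0 < d i / (∑ j, d j) := div_pos (hd i) hS
    set p := d i / (∑ j, d j) with hpdef
    have h1 := Real.log_le_sub_one_of_pos (show 0 < 1/((k:ℝ)*p) by positivity)
    have h2 : Real.log (1/((k:ℝ)*p)) = -(Real.log k + Real.log p) := by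
      rw [one_div, Real.log_inv, Real.log_mul (ne_of_gt hk0) (ne_of_gt hp0)]
    rw [h2] at h1
    have h3 : p * (1 - 1/((k:ℝ)*p)) = p - 1/(k:ℝ) := by field_simp
    have h4 : p * (1 - 1/((k:ℝ)*p)) ≤ p * (Real.log k + Real.log p) :=
      mul_le_mul_of_nonneg_left (by linarith) (le_of_lt hp0)
    rw [h3] at h4
    nlinarith [h4]
  have hsum := Finset.sum_le_sum (s := Finset.univ) (fun i _ => key i)
  have e1 : ∑ i : Fin k, (d i / (∑ j, d j) - 1/(k:ℝ)) = 0 := by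
    rw [Finset.sum_sub_distrib, ← Finset.sum_div, Finset.sum_const,
      Finset.card_univ, Fintype.card_fin]
    field_simp
    rw [nsmul_eq_mul, mul_one_div_cancel (ne_of_gt hk0), sub_self]
  have e2 : ∑ i : Fin k, ((d i / (∑ j, d j)) * Real.log (k:ℝ)
      + (d i / (∑ j, d j)) * Real.log (d i / (∑ j, d j)))
      = Real.log (k:ℝ)
        + ∑ i, (d i / (∑ j, d j)) * Real.log (d i / (∑ j, d j)) := by
    rw [Finset.sum_add_distrib, ← Finset.sum_mul, ← Finset.sum_div,
      div_self (ne_of_gt hS), one_mul]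
  rw [e1, e2] at hsum
  unfold locEnt
  linarith

lemma LS_entropy_ge (C : ℝ) (hC : 1 < C) (k : ℕ) (hk : 1 ≤ k) (d : Fin k → ℝ)
    (hd : ∀ i, 1 ≤ d i ∧ d i ≤ C) :
    Real.log k - Real.log C / (C - 1) + Real.log (Real.log C / (C - 1)) + 1
      ≤ locEnt k d := by
  have hk0 : (0:ℝ) < (k:ℝ) := by exact_mod_cast hk
  have hC1 : (0:ℝ) < C - 1 := by linarith
  have hC0 : (0:ℝ) < C := by linarith
  have hlogC : 0 < Real.log C := Real.log_pos hC
  set u := Real.log C / (C - 1) with hudef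
  have hu : 0 < u := div_pos hlogC hC1
  have hd0 : ∀ i, 0 < d i := fun i => lt_of_lt_of_le one_pos (hd i).1
  have hSk : (k:ℝ) ≤ ∑ i, d i := by
    calc (k:ℝ) = ∑ _i : Fin k, (1:ℝ) := by simp
    _ ≤ ∑ i, d i := Finset.sum_le_sum (fun i _ => (hd i).1)
  have hS : 0 < ∑ i, d i := lt_of_lt_of_le hk0 hSk
  -- chord bound
  have hchord : ∀ i : Fin k, d i * Real.log (d i) ≤ (d i - 1) * (C * u) := by
    intro i
    obtain ⟨h1, h2⟩ := hd i
    have hb0 : 0 ≤ (d i - 1) / (C - 1) := div_nonneg (by linarith) (le_of_lt hC1)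
    have hb1 : (d i - 1) / (C - 1) ≤ 1 := div_le_one_of_le₀ (by linarith) (le_of_lt hC1)
    have hconv := Real.convexOn_mul_log.2 (Set.mem_Ici.mpr zero_le_one)
      (Set.mem_Ici.mpr (le_of_lt hC0))
      (show (0:ℝ) ≤ 1 - (d i - 1)/(C - 1) by linarith) hb0 (by ring)
    simp only [smul_eq_mul, Real.log_one, mul_one, mul_zero] at hconv
    have harg : 1 - (d i - 1)/(C - 1) + (d i - 1)/(C - 1) * C = d i := by
      field_simp
      ring
    rw [harg] at hconv
    have : (d i - 1)/(C - 1) * (C * Real.log C) = (d i - 1) * (C * u) := by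
      rw [hudef]; field_simp
    nlinarith [hconv]
  have hT : ∑ i, d i * Real.log (d i) ≤ ((∑ i, d i) - k) * (C * u) := by
    calc ∑ i, d i * Real.log (d i) ≤ ∑ i, (d i - 1) * (C * u) :=
        Finset.sum_le_sum (fun i _ => hchord i)
    _ = ((∑ i, d i) - k) * (C * u) := by
        rw [← Finset.sum_mul, Finset.sum_sub_distrib, Finset.sum_const,
          Finset.card_univ, Fintype.card_fin]
        simp
  -- log x ≤ x - 1 with x = k C u / S
  have hx : (0:ℝ) < (k:ℝ) * C * u / (∑ i, d i) := by positivity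
  have hlog2 := Real.log_le_sub_one_of_pos hx
  have hlog3 : Real.log ((k:ℝ) * C * u / (∑ i, d i))
      = Real.log k + Real.log C + Real.log u - Real.log (∑ i, d i) := by
    rw [Real.log_div (by positivity) (ne_of_gt hS),
      Real.log_mul (by positivity) (ne_of_gt hu),
      Real.log_mul (ne_of_gt hk0) (ne_of_gt hC0)]
  rw [hlog3] at hlog2
  have hlogCu : Real.log C = (C - 1) * u := by
    rw [hudef]; field_simp
  have hsplit : ((∑ i, d i) - (k:ℝ)) * (C * u) / (∑ i, d i)
      = C * u - (k:ℝ) * C * u / (∑ i, d i) := by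
    field_simp
  rw [LS_entropy_eq k d hd0 hS]
  have hdiv : (∑ i, d i * Real.log (d i)) / (∑ i, d i)
      ≤ ((∑ i, d i) - (k:ℝ)) * (C * u) / (∑ i, d i) := by
    gcongr
  rw [hsplit] at hdiv
  linarith [hdiv, hlog2, hlogCu]

lemma LS_chain (k : ℕ) (d : Fin k → ℝ) (hd : ∀ i, 0 < d i)
    (hS : 0 < ∑ i, d i) (a : ℝ) (ha : 0 < a) :
    locEnt (k + 1) (Fin.snoc d a) =
      ((∑ i, d i) / ((∑ i, d i) + a)) * locEnt k d
        - ((∑ i, d i) / ((∑ i, d i) + a)) * Real.log ((∑ i, d i) / ((∑ i, d i) + a))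
        - (a / ((∑ i, d i) + a)) * Real.log (a / ((∑ i, d i) + a)) := by
  have hSa : 0 < (∑ i, d i) + a := by linarith
  unfold locEnt
  have htot : ∑ i : Fin (k + 1), Fin.snoc d a i = (∑ i, d i) + a := by
    rw [Fin.sum_univ_castSucc]
    simp
  rw [htot, Fin.sum_univ_castSucc]
  simp only [Fin.snoc_castSucc, Fin.snoc_last]
  have hterm : ∀ i : Fin k, (d i / ((∑ j, d j) + a)) * Real.log (d i / ((∑ j, d j) + a))
      = ((∑ j, d j) / ((∑ j, d j) + a)) * ((d i / (∑ j, d j)) * Real.log (d i / (∑ j, d j)))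
        + (Real.log ((∑ j, d j) / ((∑ j, d j) + a)) / ((∑ j, d j) + a)) * d i := by
    intro i
    have h1 : d i / ((∑ j, d j) + a)
        = (d i / (∑ j, d j)) * ((∑ j, d j) / ((∑ j, d j) + a)) := by
      field_simp
    rw [h1, Real.log_mul (ne_of_gt (div_pos (hd i) hS)) (ne_of_gt (div_pos hS hSa))]
    field_simp
  rw [Finset.sum_congr rfl fun i _ => hterm i, Finset.sum_add_distrib,
    ← Finset.mul_sum, ← Finset.mul_sum]
  field_simp
  ring

lemma LS_snoc_removeNth (n : ℕ) (c : Fin (n + 1) → ℝ) (j : Fin (n + 1)) :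
    locEnt (n + 1) (Fin.snoc (j.removeNth c) (c j)) = locEnt (n + 1) c := by
  have key : ∀ f : ℝ → ℝ,
      ∑ i, f ((Fin.snoc (j.removeNth c) (c j) : Fin (n+1) → ℝ) i) = ∑ i, f (c i) := by
    intro f
    rw [Fin.sum_univ_castSucc]
    simp only [Fin.snoc_castSucc, Fin.snoc_last, Fin.removeNth]
    rw [Fin.sum_univ_succAbove (fun i => f (c i)) j]
    ring
  have htot : ∑ i, Fin.snoc (j.removeNth c) (c j) i = ∑ i, c i := key (fun x => x)
  have hsum : ∑ i, ((Fin.snoc (j.removeNth c) (c j) : Fin (n+1) → ℝ) i / ∑ i, c i)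
        * Real.log ((Fin.snoc (j.removeNth c) (c j) : Fin (n+1) → ℝ) i / ∑ i, c i)
      = ∑ i, (c i / ∑ i, c i) * Real.log (c i / ∑ i, c i) :=
    key (fun x => (x / ∑ i, c i) * Real.log (x / ∑ i, c i))
  unfold locEnt
  rw [htot, hsum]

lemma LS_abs (C : ℝ) (hC : 1 < C) (k : ℕ) (hk : 1 ≤ k) (S a H Hs : ℝ)
    (hSk : (k:ℝ) ≤ S) (ha1 : 1 ≤ a) (haC : a ≤ C)
    (hHub : H ≤ Real.log k) (hHlb : Hs ≤ H) :
    |((S / (S + a)) * H - (S / (S + a)) * Real.log (S / (S + a))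
        - (a / (S + a)) * Real.log (a / (S + a))) - H|
      ≤ max (Real.log ((k:ℝ) / ((k:ℝ) + C)) + (C / ((k:ℝ) + C)) * Real.log C)
          (Real.log (1 + Real.exp (-Hs))) := by
  have hk0 : (0:ℝ) < (k:ℝ) := by exact_mod_cast hk
  have hC0 : (0:ℝ) < C := by linarith
  have hS0 : 0 < S := lt_of_lt_of_le hk0 hSk
  have ha0 : 0 < a := by linarith
  have hSa : 0 < S + a := by linarith
  set q := a / (S + a) with hqdef
  set w := S / (S + a) with hwdef
  have hq0 : 0 < q := div_pos ha0 hSa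
  have hw0 : 0 < w := div_pos hS0 hSa
  have hqw : q + w = 1 := by rw [hqdef, hwdef]; field_simp; ring
  have hL0 : 0 ≤ Real.log (1 + Real.exp (-Hs)) := by
    have := Real.exp_pos (-Hs)
    exact Real.log_nonneg (by linarith)
  rw [abs_le]
  constructor
  · -- lower bound: qH - h(q) ≤ max ...
    rw [neg_le, neg_sub]
    have hCk : (0:ℝ) < (k:ℝ) + C := by linarith
    obtain ⟨Q, hQdef⟩ : ∃ x : ℝ, x = C / ((k:ℝ) + C) := ⟨_, rfl⟩
    have hQ0 : 0 < Q := by rw [hQdef]; exact div_pos hC0 hCk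
    have hQ1 : Q < 1 := by
      rw [hQdef, div_lt_one hCk]; linarith
    have hqQ : q ≤ Q := by
      rw [hqdef, hQdef, div_le_div_iff₀ hSa hCk]
      nlinarith [mul_le_mul_of_nonneg_right haC (le_of_lt hk0),
        mul_le_mul_of_nonneg_left hSk (le_of_lt hC0)]
    obtain ⟨t, htdef⟩ : ∃ x : ℝ, x = q / Q := ⟨_, rfl⟩
    have ht0 : 0 < t := by rw [htdef]; exact div_pos hq0 hQ0
    have ht1 : t ≤ 1 := by rw [htdef]; exact (div_le_one hQ0).mpr hqQ
    have hqt : q = t * Q := by rw [htdef]; field_simp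
    clear_value q w
    have c1 := Real.convexOn_mul_log.2 (Set.mem_Ici.mpr (le_refl (0:ℝ)))
      (Set.mem_Ici.mpr (le_of_lt hQ0))
      (show (0:ℝ) ≤ 1 - t by linarith) (le_of_lt ht0) (by ring)
    simp only [smul_eq_mul, mul_zero, zero_add, Real.log_zero, zero_mul, add_zero] at c1
    have c2 := Real.convexOn_mul_log.2 (Set.mem_Ici.mpr zero_le_one)
      (Set.mem_Ici.mpr (show (0:ℝ) ≤ 1 - Q by linarith))
      (show (0:ℝ) ≤ 1 - t by linarith) (le_of_lt ht0) (by ring)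
    simp only [smul_eq_mul, mul_one, one_mul, Real.log_one, mul_zero, add_zero,
      zero_add] at c2
    have hwarg : 1 - t + t * (1 - Q) = w := by
      have h := hqt
      linarith [hqw]
    rw [hwarg] at c2
    have hqH : q * H ≤ q * Real.log (k:ℝ) := mul_le_mul_of_nonneg_left hHub (le_of_lt hq0)
    have hpsi : Q * Real.log (k:ℝ) + Q * Real.log Q + (1 - Q) * Real.log (1 - Q)
        = Real.log ((k:ℝ) / ((k:ℝ) + C)) + (C / ((k:ℝ) + C)) * Real.log C := by
      have h1mQ : 1 - Q = (k:ℝ) / ((k:ℝ) + C) := by rw [hQdef]; field_simp; ring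
      rw [h1mQ, hQdef, Real.log_div (ne_of_gt hC0) (ne_of_gt hCk),
        Real.log_div (ne_of_gt hk0) (ne_of_gt hCk)]
      field_simp [ne_of_gt hCk]
      ring
    have hident : H - (w * H - w * Real.log w - q * Real.log q)
        = q * H + q * Real.log q + w * Real.log w := by
      linear_combination (-H) * hqw
    rw [hident]
    have step1 : q * H + q * Real.log q + w * Real.log w
        ≤ t * (Q * Real.log (k:ℝ) + Q * Real.log Q + (1 - Q) * Real.log (1 - Q)) := by
      have e1 : q * Real.log (k:ℝ) = t * Q * Real.log (k:ℝ) := by rw [hqt]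
      have e2 : q * Real.log q = (t * Q) * Real.log (t * Q) := by rw [← hqt]
      nlinarith [c1, c2, hqH, e1, e2]
    rw [hpsi] at step1
    obtain ⟨Ek, hEkdef⟩ : ∃ x : ℝ,
        x = Real.log ((k:ℝ) / ((k:ℝ) + C)) + (C / ((k:ℝ) + C)) * Real.log C := ⟨_, rfl⟩
    rw [← hEkdef] at step1 ⊢
    rcases le_or_gt 0 Ek with hE | hE
    · refine le_trans step1 (le_trans ?_ (le_max_left _ _))
      have h := mul_le_mul_of_nonneg_right ht1 hE
      linarith
    · refine le_trans step1 (le_trans ?_ (le_trans hL0 (le_max_right _ _)))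
      have h : t * Ek ≤ 0 := mul_nonpos_iff.mpr (Or.inl ⟨le_of_lt ht0, le_of_lt hE⟩)
      linarith
  · -- upper bound
    set LH := Real.log (1 + Real.exp (-H)) with hLHdef
    have hpos : (0:ℝ) < 1 + Real.exp (-H) := by positivity
    have hexpLH : Real.exp LH = 1 + Real.exp (-H) := Real.exp_log hpos
    clear_value LH
    have e1 := Real.log_le_sub_one_of_pos
      (show 0 < Real.exp (-H) / (q * Real.exp LH) by positivity)
    have e1' : Real.log (Real.exp (-H) / (q * Real.exp LH)) = -H - Real.log q - LH := by
      rw [Real.log_div (by positivity) (by positivity),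
        Real.log_mul (ne_of_gt hq0) (by positivity), Real.log_exp, Real.log_exp]
      ring
    rw [e1'] at e1
    have m1 : q * (-H - Real.log q - LH) ≤ Real.exp (-H) / Real.exp LH - q := by
      have h := mul_le_mul_of_nonneg_left e1 (le_of_lt hq0)
      have h2 : q * (Real.exp (-H) / (q * Real.exp LH) - 1)
          = Real.exp (-H) / Real.exp LH - q := by
        field_simp
      linarith
    have e2 := Real.log_le_sub_one_of_pos
      (show 0 < 1 / (w * Real.exp LH) by positivity)
    have e2' : Real.log (1 / (w * Real.exp LH)) = -Real.log w - LH := by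
      rw [one_div, Real.log_inv, Real.log_mul (ne_of_gt hw0) (by positivity),
        Real.log_exp]
      ring
    rw [e2'] at e2
    have m2 : w * (-Real.log w - LH) ≤ 1 / Real.exp LH - w := by
      have h := mul_le_mul_of_nonneg_left e2 (le_of_lt hw0)
      have h2 : w * (1 / (w * Real.exp LH) - 1) = 1 / Real.exp LH - w := by
        field_simp
      linarith
    have hne : (1:ℝ) + Real.exp (-H) ≠ 0 := ne_of_gt hpos
    have hdiv1 : Real.exp (-H) / Real.exp LH + 1 / Real.exp LH = 1 := by
      rw [hexpLH]
      field_simp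
      ring
    have exp1 : q * (-H - Real.log q - LH) = -(q*H) - q*Real.log q - q*LH := by ring
    have exp2 : w * (-Real.log w - LH) = -(w*Real.log w) - w*LH := by ring
    have hLHsum : q*LH + w*LH = LH := by
      rw [← add_mul, hqw, one_mul]
    have hXH : (w * H - w * Real.log w - q * Real.log q) - H
        = -(q*H) - w*Real.log w - q*Real.log q := by
      linear_combination H * hqw
    have hfinal : (w * H - w * Real.log w - q * Real.log q) - H ≤ LH := by
      linarith [m1, m2, hdiv1, hLHsum, hXH, exp1, exp2]
    have hmono : LH ≤ Real.log (1 + Real.exp (-Hs)) := by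
      rw [hLHdef]
      apply Real.log_le_log hpos
      have := Real.exp_le_exp.mpr (show -H ≤ -Hs by linarith)
      linarith
    exact le_trans hfinal (le_trans hmono (le_max_right _ _))

lemma LS_core (C : ℝ) (hC : 1 < C) (k : ℕ) (hk : 1 ≤ k) (d : Fin k → ℝ)
    (hd : ∀ i, 1 ≤ d i ∧ d i ≤ C) (a : ℝ) (ha1 : 1 ≤ a) (haC : a ≤ C) :
    |locEnt (k + 1) (Fin.snoc d a) - locEnt k d| ≤
      max (Real.log ((k:ℝ) / ((k:ℝ) + C)) + (C / ((k:ℝ) + C)) * Real.log C)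
        (Real.log (1 + Real.exp (-(Real.log k - Real.log C / (C - 1)
          + Real.log (Real.log C / (C - 1)) + 1)))) := by
  have hd0 : ∀ i, 0 < d i := fun i => lt_of_lt_of_le one_pos (hd i).1
  have hk0 : (0:ℝ) < (k:ℝ) := by exact_mod_cast hk
  have hSk : (k:ℝ) ≤ ∑ i, d i := by
    calc (k:ℝ) = ∑ _i : Fin k, (1:ℝ) := by simp
    _ ≤ ∑ i, d i := Finset.sum_le_sum (fun i _ => (hd i).1)
  have hS : 0 < ∑ i, d i := lt_of_lt_of_le hk0 hSk
  rw [LS_chain k d hd0 hS a (by linarith)]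
  exact LS_abs C hC k hk (∑ i, d i) a (locEnt k d) _ hSk ha1 haC
    (LS_entropy_le k hk d hd0) (LS_entropy_ge C hC k hk d hd)

/-- Local sensitivity bound for a location with `n ≥ 2` users, each contributing
between `1` and `C` visits: the entropy change from adding or removing one user
is at most `max{E₁, E₂, E₃}`. -/
theorem localSensitivity_bound (C : ℝ) (hC : 1 < C) (n : ℕ) (hn : 1 ≤ n)
    (c : Fin (n + 1) → ℝ) (hc : ∀ i, 1 ≤ c i ∧ c i ≤ C) :
    let Hstar : ℝ := Real.log n - Real.log C / (C - 1)
      + Real.log (Real.log C / (C - 1)) + 1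
    let E₁ : ℝ := Real.log ((n : ℝ) / ((n : ℝ) + C)) + (C / ((n : ℝ) + C)) * Real.log C
    let E₂ : ℝ := Real.log (((n : ℝ) + 1) / ((n : ℝ) + 1 + C))
      + (C / ((n : ℝ) + 1 + C)) * Real.log C
    let E₃ : ℝ := Real.log (1 + Real.exp (-Hstar))
    (∀ a : ℝ, 1 ≤ a → a ≤ C →
      |locEnt (n + 2) (Fin.snoc c a) - locEnt (n + 1) c| ≤ max E₁ (max E₂ E₃)) ∧
    (∀ j : Fin (n + 1),
      |locEnt n (j.removeNth c) - locEnt (n + 1) c| ≤ max E₁ (max E₂ E₃)) := by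
  intro Hstar E₁ E₂ E₃
  have hHstar : Hstar = Real.log n - Real.log C / (C - 1)
      + Real.log (Real.log C / (C - 1)) + 1 := rfl
  have hE₁ : E₁ = Real.log ((n : ℝ) / ((n : ℝ) + C))
      + (C / ((n : ℝ) + C)) * Real.log C := rfl
  have hE₂ : E₂ = Real.log (((n : ℝ) + 1) / ((n : ℝ) + 1 + C))
      + (C / ((n : ℝ) + 1 + C)) * Real.log C := rfl
  have hE₃ : E₃ = Real.log (1 + Real.exp (-Hstar)) := rfl
  have hn0 : (0:ℝ) < (n:ℝ) := by exact_mod_cast hn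
  have hmono3 : Real.log (1 + Real.exp (-(Real.log ((n:ℝ) + 1) - Real.log C / (C - 1)
      + Real.log (Real.log C / (C - 1)) + 1))) ≤ E₃ := by
    rw [hE₃, hHstar]
    apply Real.log_le_log (by positivity)
    have hln : Real.log (n:ℝ) ≤ Real.log ((n:ℝ) + 1) := Real.log_le_log hn0 (by linarith)
    have := Real.exp_le_exp.mpr (show -(Real.log ((n:ℝ) + 1) - Real.log C / (C - 1)
        + Real.log (Real.log C / (C - 1)) + 1)
        ≤ -(Real.log (n:ℝ) - Real.log C / (C - 1)
        + Real.log (Real.log C / (C - 1)) + 1) by linarith)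
    linarith
  constructor
  · intro a ha1 haC
    have h := LS_core C hC (n + 1) (by omega) c hc a ha1 haC
    have hcast : ((n + 1 : ℕ) : ℝ) = (n : ℝ) + 1 := by push_cast; ring
    rw [hcast] at h
    refine le_trans h (max_le ?_ ?_)
    · rw [← hE₂] at *
      exact le_trans (le_max_left E₂ E₃) (le_max_right E₁ _)
    · exact le_trans hmono3 (le_trans (le_max_right E₂ E₃) (le_max_right E₁ _))
  · intro j
    have h := LS_core C hC n hn (j.removeNth c)
      (fun i => hc (j.succAbove i)) (c j) (hc j).1 (hc j).2
    rw [LS_snoc_removeNth n c j, abs_sub_comm] at h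
    refine le_trans h (max_le ?_ ?_)
    · rw [← hE₁]
      exact le_max_left _ _
    · rw [← hHstar, ← hE₃]
      exact le_trans (le_max_right E₂ E₃) (le_max_right E₁ _)
end

section
/- Let C ≥ 2 be a real number. For any n ≥ 1 and any real visit counts c₁,…,c_n with 1 ≤ c_i ≤ C, and for any added count a with 1 ≤ a ≤ C, the change in location entropy from adding the new user satisfies |H(c₁,…,c_n,a) − H(c₁,…,c_n)| ≤ max{ log 2, log C − log(log C) − 1 }; and for n ≥ 2 and any index j, the change from removing user j satisfies the same bound |H of the counts with c_j removed − H(c₁,…,c_n)| ≤ max{ log 2, log C − log(log C) − 1 }. (This is the global sensitivity bound for location entropy.) -/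
/-- Binary entropy function. -/
noncomputable def hb (l : ℝ) : ℝ :=
  -(l * Real.log l) - (1 - l) * Real.log (1 - l)

lemma hb_le_log_two {l : ℝ} (h0 : 0 < l) (h1 : l < 1) : hb l ≤ Real.log 2 := by
  have h1' : 0 < 1 - l := by linarith
  have A : Real.log (1 / (2 * l)) ≤ 1 / (2 * l) - 1 :=
    Real.log_le_sub_one_of_pos (by positivity)
  have B : Real.log (1 / (2 * (1 - l))) ≤ 1 / (2 * (1 - l)) - 1 :=
    Real.log_le_sub_one_of_pos (by positivity)
  have hA : Real.log (1 / (2 * l)) = -(Real.log 2 + Real.log l) := by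
    rw [Real.log_div one_ne_zero (by positivity), Real.log_mul two_ne_zero (ne_of_gt h0)]
    simp
  have hB : Real.log (1 / (2 * (1 - l))) = -(Real.log 2 + Real.log (1 - l)) := by
    rw [Real.log_div one_ne_zero (by positivity), Real.log_mul two_ne_zero (ne_of_gt h1')]
    simp
  rw [hA] at A
  rw [hB] at B
  -- multiply A by l and B by (1-l)
  have hl : l * (1 / (2 * l)) = 1 / 2 := by
    rw [mul_one_div, mul_comm 2 l, ← div_div, div_self (ne_of_gt h0)]
  have hl' : (1 - l) * (1 / (2 * (1 - l))) = 1 / 2 := by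
    rw [mul_one_div, mul_comm 2 (1 - l), ← div_div, div_self (ne_of_gt h1')]
  have A' : -(l * Real.log l) ≤ l * Real.log 2 + 1 / 2 - l := by
    have := mul_le_mul_of_nonneg_left A (le_of_lt h0)
    nlinarith [this, hl]
  have B' : -((1 - l) * Real.log (1 - l)) ≤ (1 - l) * Real.log 2 + 1 / 2 - (1 - l) := by
    have := mul_le_mul_of_nonneg_left B (le_of_lt h1')
    nlinarith [this, hl']
  have : hb l ≤ l * Real.log 2 + (1 - l) * Real.log 2 := by
    unfold hb; linarith
  nlinarith [this]

/-- Core analytic lemma. -/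
lemma core (C S a H : ℝ) (hC : 2 ≤ C) (hS : 1 ≤ S) (ha : 0 < a) (haC : a ≤ C)
    (hH0 : 0 ≤ H) (hHS : H ≤ Real.log S) :
    |(S / (S + a)) * H + hb (S / (S + a)) - H| ≤
      max (Real.log 2) (Real.log C - Real.log (Real.log C) - 1) := by
  have hS0 : 0 < S := by linarith
  have hT : 0 < S + a := by linarith
  set l := S / (S + a) with hl
  have hl0 : 0 < l := by positivity
  have hl1 : l < 1 := by
    rw [hl, div_lt_one hT]; linarith
  have h1l : 1 - l = a / (S + a) := by
    rw [hl]; field_simp; ring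
  have h1l0 : 0 < 1 - l := by linarith
  have hlogC : 0 < Real.log C := by
    have := Real.log_pos (by linarith : (1:ℝ) < C)
    linarith
  -- upper bound
  have hub : (S / (S + a)) * H + hb (S / (S + a)) - H ≤ Real.log 2 := by
    have heq : l * H + hb l - H = hb l - (1 - l) * H := by ring
    rw [← hl, heq]
    have h1 : 0 ≤ (1 - l) * H := mul_nonneg (le_of_lt h1l0) hH0
    have h2 := hb_le_log_two hl0 hl1
    linarith
  -- lower bound
  have hlb : -(max (Real.log 2) (Real.log C - Real.log (Real.log C) - 1)) ≤
      (S / (S + a)) * H + hb (S / (S + a)) - H := by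
    rw [← hl]
    have key : (1 - l) * H - hb l ≤ Real.log C - Real.log (Real.log C) - 1 := by
      have e1 : (1 - l) * H - hb l ≤
          (1 - l) * Real.log S + l * Real.log l + (1 - l) * Real.log (1 - l) := by
        unfold hb
        nlinarith [mul_le_mul_of_nonneg_left hHS (le_of_lt h1l0)]
      have hSl : S * (1 - l) = l * a := by
        rw [hl, h1l]; field_simp
      have e2 : Real.log S + Real.log (1 - l) = Real.log (l * a) := by
        rw [← Real.log_mul (ne_of_gt hS0) (ne_of_gt h1l0), hSl]
      have e3 : Real.log (l * a) ≤ Real.log (l * C) := by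
        apply Real.log_le_log (by positivity)
        exact mul_le_mul_of_nonneg_left haC (le_of_lt hl0)
      have e4 : Real.log (l * C) = Real.log l + Real.log C :=
        Real.log_mul (ne_of_gt hl0) (by linarith)
      have e5 : (1 - l) * H - hb l ≤ Real.log l + (1 - l) * Real.log C := by
        have := mul_le_mul_of_nonneg_left (e3.trans_eq e4) (le_of_lt h1l0)
        nlinarith [e1, e2]
      have hx : Real.log (l * Real.log C) ≤ l * Real.log C - 1 :=
        Real.log_le_sub_one_of_pos (by positivity)
      have hx2 : Real.log (l * Real.log C) = Real.log l + Real.log (Real.log C) :=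
        Real.log_mul (ne_of_gt hl0) (ne_of_gt hlogC)
      nlinarith [e5, hx, hx2]
    have hm : Real.log C - Real.log (Real.log C) - 1 ≤
        max (Real.log 2) (Real.log C - Real.log (Real.log C) - 1) := le_max_right _ _
    have h' : l * H + hb l - H = -((1 - l) * H - hb l) := by ring
    rw [h']
    linarith
  rw [abs_le]
  exact ⟨hlb, le_trans hub (le_max_left _ _)⟩

/-- Splitting identity for location entropy. -/
lemma locEnt_split (n : ℕ) (c : Fin (n + 1) → ℝ) (j : Fin (n + 1))
    (hc : ∀ i, 0 < c i) (hn : 1 ≤ n) :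
    locEnt (n + 1) c =
      (∑ i, j.removeNth c i) / ((∑ i, j.removeNth c i) + c j) * locEnt n (j.removeNth c)
        + hb ((∑ i, j.removeNth c i) / ((∑ i, j.removeNth c i) + c j)) := by
  set d : Fin n → ℝ := j.removeNth c with hd
  have hdpos : ∀ i, 0 < d i := fun i => hc _
  set S : ℝ := ∑ i, d i with hS
  have hS0 : 0 < S := by
    rw [hS]
    exact Finset.sum_pos (fun i _ => hdpos i) ⟨⟨0, by omega⟩, Finset.mem_univ _⟩
  have hT0 : 0 < S + c j := by have := hc j; linarith
  have hTne : S + c j ≠ 0 := ne_of_gt hT0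
  have hTne' : c j + S ≠ 0 := by rw [add_comm]; exact hTne
  have hsum : (∑ i, c i) = c j + S := by
    rw [hS, hd]
    exact Fin.sum_univ_succAbove c j
  set l : ℝ := S / (S + c j) with hl
  have hl0 : 0 < l := by positivity
  have hl1 : l < 1 := by rw [hl, div_lt_one hT0]; have := hc j; linarith
  have h1l : 1 - l = c j / (S + c j) := by rw [hl]; field_simp; ring
  unfold locEnt
  rw [hsum, Fin.sum_univ_succAbove (fun i => (c i / (c j + S)) * Real.log (c i / (c j + S))) j]
  have hterm : ∀ i : Fin n, (c (j.succAbove i) / (c j + S)) *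
      Real.log (c (j.succAbove i) / (c j + S)) =
      l * ((d i / S) * Real.log (d i / S)) + l * (d i / S) * Real.log l := by
    intro i
    have hdi : d i = c (j.succAbove i) := rfl
    have h1 : c (j.succAbove i) / (c j + S) = l * (d i / S) := by
      rw [hl, hdi]; field_simp; ring
    rw [h1, Real.log_mul (ne_of_gt hl0) (ne_of_gt (div_pos (hdpos i) hS0)), hl]
    ring
  rw [Finset.sum_congr rfl (fun i _ => hterm i)]
  have hsum1 : (∑ i, (d i / S)) = 1 := by
    rw [← Finset.sum_div, ← hS, div_self (ne_of_gt hS0)]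
  have hd1 : (∑ i : Fin n, l * (d i / S) * Real.log l) = l * Real.log l := by
    have h : (∑ i : Fin n, l * (d i / S) * Real.log l) =
        l * Real.log l * (∑ i, (d i / S)) := by
      rw [Finset.mul_sum]; apply Finset.sum_congr rfl; intro i _; ring
    rw [h, hsum1, mul_one]
  have hcj : c j / (c j + S) = 1 - l := by rw [h1l, add_comm]
  rw [Finset.sum_add_distrib, ← Finset.mul_sum, hd1, hcj, ← hS]
  unfold hb
  ring

/-- locEnt is between 0 and log of the total, when each count is ≥ 1. -/
lemma locEnt_bounds (n : ℕ) (c : Fin n → ℝ) (hc : ∀ i, 1 ≤ c i) (hn : 1 ≤ n) :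
    0 ≤ locEnt n c ∧ locEnt n c ≤ Real.log (∑ i, c i) := by
  set S : ℝ := ∑ i, c i with hS
  have hcpos : ∀ i, 0 < c i := fun i => zero_lt_one.trans_le (hc i)
  have hS0 : 0 < S := by
    rw [hS]
    exact Finset.sum_pos (fun i _ => hcpos i) ⟨⟨0, by omega⟩, Finset.mem_univ _⟩
  have hle : ∀ i, c i ≤ S := by
    intro i
    rw [hS]
    exact Finset.single_le_sum (fun i _ => le_of_lt (hcpos i)) (Finset.mem_univ i)
  constructor
  · unfold locEnt
    rw [← hS, neg_nonneg]
    apply Finset.sum_nonpos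
    intro i _
    apply mul_nonpos_of_nonneg_of_nonpos
    · exact div_nonneg (le_of_lt (hcpos i)) (le_of_lt hS0)
    · apply Real.log_nonpos
      · exact div_nonneg (le_of_lt (hcpos i)) (le_of_lt hS0)
      · rw [div_le_one hS0]; exact hle i
  · unfold locEnt
    rw [← hS]
    have hterm : ∀ i : Fin n, (c i / S) * Real.log (c i / S) =
        (c i / S) * Real.log (c i) - (c i / S) * Real.log S := by
      intro i
      rw [Real.log_div (ne_of_gt (hcpos i)) (ne_of_gt hS0)]
      ring
    rw [Finset.sum_congr rfl (fun i _ => hterm i), Finset.sum_sub_distrib]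
    have hsum1 : (∑ i, (c i / S) * Real.log S) = Real.log S := by
      rw [← Finset.sum_mul, ← Finset.sum_div, ← hS, div_self (ne_of_gt hS0), one_mul]
    rw [hsum1]
    have hpos : 0 ≤ ∑ i, (c i / S) * Real.log (c i) := by
      apply Finset.sum_nonneg
      intro i _
      exact mul_nonneg (div_nonneg (le_of_lt (hcpos i)) (le_of_lt hS0))
        (Real.log_nonneg (hc i))
    linarith

lemma one_le_sum {n : ℕ} (c : Fin n → ℝ) (hc : ∀ i, 1 ≤ c i) (hn : 1 ≤ n) :
    (1 : ℝ) ≤ ∑ i, c i := by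
  have h1 : (∑ _i : Fin n, (1 : ℝ)) ≤ ∑ i, c i := by
    apply Finset.sum_le_sum
    intro i _
    exact hc i
  have h2 : (∑ _i : Fin n, (1 : ℝ)) = (n : ℝ) := by simp
  have h3 : (1 : ℝ) ≤ (n : ℝ) := by exact_mod_cast hn
  linarith

/-- Global sensitivity bound of location entropy: if every user contributes
between `1` and `C` visits, the entropy change from adding or removing a single
user is at most `max{log 2, log C − log(log C) − 1}`. -/
theorem globalSensitivity_bound (C : ℝ) (hC : 2 ≤ C) :
    (∀ (n : ℕ), 1 ≤ n → ∀ c : Fin n → ℝ, (∀ i, 1 ≤ c i ∧ c i ≤ C) →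
      ∀ a : ℝ, 1 ≤ a → a ≤ C →
        |locEnt (n + 1) (Fin.snoc c a) - locEnt n c| ≤
          max (Real.log 2) (Real.log C - Real.log (Real.log C) - 1)) ∧
    (∀ (n : ℕ), 1 ≤ n → ∀ c : Fin (n + 1) → ℝ, (∀ i, 1 ≤ c i ∧ c i ≤ C) →
      ∀ j : Fin (n + 1),
        |locEnt n (j.removeNth c) - locEnt (n + 1) c| ≤
          max (Real.log 2) (Real.log C - Real.log (Real.log C) - 1)) := by
  constructor
  · intro n hn c hc a ha haC
    have hc1 : ∀ i, 1 ≤ c i := fun i => (hc i).1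
    have hcpos : ∀ i, 0 < c i := fun i => zero_lt_one.trans_le (hc1 i)
    have hsnocpos : ∀ i : Fin (n + 1), 0 < (Fin.snoc c a : Fin (n + 1) → ℝ) i := by
      intro i
      refine Fin.lastCases ?_ (fun i => ?_) i
      · rw [Fin.snoc_last]; linarith
      · rw [Fin.snoc_castSucc]; exact hcpos i
    have hsplit := locEnt_split n (Fin.snoc c a) (Fin.last n) hsnocpos hn
    rw [Fin.removeNth_last, Fin.init_snoc, Fin.snoc_last] at hsplit
    have hS1 := one_le_sum c hc1 hn
    have hbd := locEnt_bounds n c hc1 hn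
    rw [hsplit]
    exact core C (∑ i, c i) a (locEnt n c) hC hS1 (by linarith) haC hbd.1 hbd.2
  · intro n hn c hc j
    have hc1 : ∀ i, 1 ≤ c i := fun i => (hc i).1
    have hcpos : ∀ i, 0 < c i := fun i => zero_lt_one.trans_le (hc1 i)
    have hsplit := locEnt_split n c j hcpos hn
    have hd1 : ∀ i, 1 ≤ j.removeNth c i := fun i => hc1 _
    have hS1 := one_le_sum (j.removeNth c) hd1 hn
    have hbnd := locEnt_bounds n (j.removeNth c) hd1 hn
    rw [abs_sub_comm, hsplit]
    exact core C (∑ i, j.removeNth c i) (c j) (locEnt n (j.removeNth c)) hC hS1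
      (hcpos j) (hc j).2 hbnd.1 hbnd.2
end

section
/- Let C > e be a real number. The function g(x) = (C·log C)/(x + C) + log(x/(x + C)), defined for real x > 0, attains its maximum over (0, ∞) at x = C/(log C − 1), and its maximum value equals log C − log(log C) − 1. -/
/-!
With `L = log C` and `t = x / (x + C) ∈ (0, 1)` the function becomes `L (1 - t) + log t`.
The tangent-line bound `log (L t) ≤ L t - 1` turns this into `L (1 - t) + log t ≤ L - log L - 1`,
with equality exactly when `L t = 1`, i.e. at `x = C / (L - 1)`.
-/

open Real

lemma mul_one_sub_add_log_le {L t : ℝ} (hL : 0 < L) (ht : 0 < t) :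
    L * (1 - t) + log t ≤ L - log L - 1 := by
  have h := log_le_sub_one_of_pos (mul_pos hL ht)
  rw [log_mul hL.ne' ht.ne'] at h
  linarith

lemma mul_one_sub_inv_add_log_inv (L : ℝ) (hL : L ≠ 0) :
    L * (1 - L⁻¹) + log L⁻¹ = L - log L - 1 := by
  rw [log_inv, mul_sub, mul_inv_cancel₀ hL]
  ring

lemma mul_div_add_eq_mul_one_sub_div {x C : ℝ} (L : ℝ) (hxC : x + C ≠ 0) :
    C * L / (x + C) = L * (1 - x / (x + C)) := by
  field_simp
  ring

lemma div_sub_one_div_add_self {C L : ℝ} (hC : C ≠ 0) (hL : L - 1 ≠ 0) :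
    C / (L - 1) / (C / (L - 1) + C) = L⁻¹ := by
  have hsum : C / (L - 1) + C = C * L / (L - 1) := by
    field_simp
    ring
  rw [hsum, div_div_div_cancel_right₀ hL, div_mul_cancel_left₀ hC]

/-- The worst-case entropy-change function `g(x) = C·log C/(x+C) + log(x/(x+C))`
attains its maximum over `(0, ∞)` at `x = C/(log C − 1)`, with maximum value
`log C − log(log C) − 1`. -/
theorem g_max (C : ℝ) (hC : Real.exp 1 < C) :
    (∀ x ∈ Set.Ioi (0 : ℝ),
      (C * Real.log C) / (x + C) + Real.log (x / (x + C)) ≤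
        (C * Real.log C) / (C / (Real.log C - 1) + C)
          + Real.log ((C / (Real.log C - 1)) / (C / (Real.log C - 1) + C))) ∧
    C / (Real.log C - 1) ∈ Set.Ioi (0 : ℝ) ∧
    (C * Real.log C) / (C / (Real.log C - 1) + C)
        + Real.log ((C / (Real.log C - 1)) / (C / (Real.log C - 1) + C)) =
      Real.log C - Real.log (Real.log C) - 1 := by
  have hC0 : 0 < C := (exp_pos 1).trans hC
  have hL : 1 < log C := by simpa using log_lt_log (exp_pos 1) hC
  have hx₀ : 0 < C / (log C - 1) := div_pos hC0 (by linarith)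
  have hmax : C * log C / (C / (log C - 1) + C)
      + log (C / (log C - 1) / (C / (log C - 1) + C)) = log C - log (log C) - 1 := by
    rw [mul_div_add_eq_mul_one_sub_div _ (by positivity),
      div_sub_one_div_add_self hC0.ne' (by linarith)]
    exact mul_one_sub_inv_add_log_inv _ (by positivity)
  refine ⟨fun x hx => ?_, hx₀, hmax⟩
  have hx : 0 < x := hx
  rw [hmax, mul_div_add_eq_mul_one_sub_div _ (by positivity)]
  exact mul_one_sub_add_log_le (by linarith) (by positivity)
end

section
/- For any positive real visit counts c₁,…,c_n and any added count a > 0, the location entropy after adding one user satisfies H(c₁,…,c_n,a) ≤ log( exp(H(c₁,…,c_n)) + 1 ). Equivalently, adding a single user increases the location entropy by at most log(1 + exp(−H(c₁,…,c_n))), and this bound is attained when a/(c + a) = 1/(exp(H(c₁,…,c_n)) + 1), where c = c₁ + ⋯ + c_n. -/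
lemma snoc_locEnt (n : ℕ) (hn : 1 ≤ n) (c : Fin n → ℝ) (hc : ∀ i, 0 < c i)
    (a : ℝ) (ha : 0 < a) :
    locEnt (n + 1) (Fin.snoc c a) =
      ((∑ i, c i) / ((∑ i, c i) + a)) * locEnt n c
      - ((∑ i, c i) / ((∑ i, c i) + a)) * Real.log ((∑ i, c i) / ((∑ i, c i) + a))
      - (a / ((∑ i, c i) + a)) * Real.log (a / ((∑ i, c i) + a)) := by
  have hS : 0 < ∑ i, c i := Finset.sum_pos (fun i _ => hc i) ⟨⟨0, hn⟩, Finset.mem_univ _⟩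
  set S := ∑ i, c i with hSdef
  have hT : 0 < S + a := by linarith
  have hS' : S ≠ 0 := hS.ne'
  have hT' : S + a ≠ 0 := hT.ne'
  have hsum : ∑ j, Fin.snoc c a j = S + a := by
    rw [Fin.sum_univ_castSucc]; simp [hSdef]
  unfold locEnt
  rw [hsum, Fin.sum_univ_castSucc]
  simp only [Fin.snoc_castSucc, Fin.snoc_last]
  have hterm : ∀ i, (c i / (S + a)) * Real.log (c i / (S + a))
      = (S / (S + a)) * ((c i / S) * Real.log (c i / S))
        + (Real.log (S / (S + a)) * (S / (S + a))) * (c i / S) := by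
    intro i
    have hci := hc i
    have hlog : Real.log (c i / (S + a)) = Real.log (c i / S) + Real.log (S / (S + a)) := by
      rw [← Real.log_mul (by positivity) (by positivity)]
      congr 1
      field_simp
    rw [hlog]
    field_simp
  rw [Finset.sum_congr rfl (fun i _ => hterm i), Finset.sum_add_distrib,
    ← Finset.mul_sum, ← Finset.mul_sum]
  have h1 : ∑ i, c i / S = 1 := by rw [← Finset.sum_div]; exact div_self hS'
  rw [h1]
  ring

lemma ent_bound (H t q : ℝ) (ht : 0 < t) (hq : 0 < q) (htq : t + q = 1) :
    t * H - t * Real.log t - q * Real.log q ≤ Real.log (Real.exp H + 1) := by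
  have hx : Real.exp H / t ∈ Set.Ioi (0:ℝ) := by
    simp only [Set.mem_Ioi]; positivity
  have hy : 1 / q ∈ Set.Ioi (0:ℝ) := by
    simp only [Set.mem_Ioi]; positivity
  have key := strictConcaveOn_log_Ioi.concaveOn.2 hx hy ht.le hq.le htq
  simp only [smul_eq_mul] at key
  have e1 : Real.log (Real.exp H / t) = H - Real.log t := by
    rw [Real.log_div (Real.exp_ne_zero H) ht.ne', Real.log_exp]
  have e2 : Real.log (1 / q) = -Real.log q := by
    rw [one_div, Real.log_inv]
  have e3 : t * (Real.exp H / t) + q * (1 / q) = Real.exp H + 1 := by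
    field_simp
  rw [e1, e2, e3] at key
  linarith

lemma ent_eq (H q : ℝ) (hq : q = 1 / (Real.exp H + 1)) :
    (1 - q) * H - (1 - q) * Real.log (1 - q) - q * Real.log q
      = Real.log (Real.exp H + 1) := by
  have hE : 0 < Real.exp H + 1 := by positivity
  have h1q : 1 - q = Real.exp H / (Real.exp H + 1) := by
    rw [hq]; field_simp; ring
  have lq : Real.log q = -Real.log (Real.exp H + 1) := by
    rw [hq, one_div, Real.log_inv]
  have l1q : Real.log (1 - q) = H - Real.log (Real.exp H + 1) := by
    rw [h1q, Real.log_div (Real.exp_ne_zero H) hE.ne', Real.log_exp]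
  rw [lq, l1q, h1q, hq]
  field_simp
  ring

/-- Adding a single user increases the location entropy to at most
`log(exp H + 1)`, with equality when `a/(c+a) = 1/(exp H + 1)`. -/
theorem locEnt_add_user_upper_bound (n : ℕ) (hn : 1 ≤ n) (c : Fin n → ℝ)
    (hc : ∀ i, 0 < c i) :
    (∀ a : ℝ, 0 < a →
      locEnt (n + 1) (Fin.snoc c a) ≤ Real.log (Real.exp (locEnt n c) + 1)) ∧
    (∀ a : ℝ, 0 < a →
      a / ((∑ i, c i) + a) = 1 / (Real.exp (locEnt n c) + 1) →
      locEnt (n + 1) (Fin.snoc c a) = Real.log (Real.exp (locEnt n c) + 1)) := by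
  have hS : 0 < ∑ i, c i := Finset.sum_pos (fun i _ => hc i) ⟨⟨0, hn⟩, Finset.mem_univ _⟩
  constructor
  · intro a ha
    have hT : 0 < (∑ i, c i) + a := by linarith
    rw [snoc_locEnt n hn c hc a ha]
    exact ent_bound (locEnt n c) _ _ (by positivity) (by positivity)
      (by field_simp)
  · intro a ha hq
    have hT : 0 < (∑ i, c i) + a := by linarith
    rw [snoc_locEnt n hn c hc a ha]
    have ht : (∑ i, c i) / ((∑ i, c i) + a) = 1 - a / ((∑ i, c i) + a) := by
      field_simp
      ring
    rw [ht]
    exact ent_eq (locEnt n c) _ hq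
end

section
/- Let C > e be a real number. The function f(x) = log(x/(x + C)) + (C/(x + C))·log C is strictly decreasing on the interval [C/(log C − 1), ∞). -/
/-- The worst-case local-sensitivity expression
`f(x) = log(x/(x+C)) + (C/(x+C))·log C` is strictly decreasing on
`[C/(log C − 1), ∞)` whenever `C > e`. -/
theorem f_strictAntiOn (C : ℝ) (hC : Real.exp 1 < C) :
    StrictAntiOn (fun x : ℝ => Real.log (x / (x + C)) + (C / (x + C)) * Real.log C)
      (Set.Ici (C / (Real.log C - 1))) := by
  have hC0 : (0:ℝ) < C := lt_trans (Real.exp_pos 1) hC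
  have hlog : 1 < Real.log C := by
    have := Real.log_lt_log (Real.exp_pos 1) hC
    simpa using this
  set a := C / (Real.log C - 1) with ha_def
  have ha : 0 < a := div_pos hC0 (by linarith)
  apply strictAntiOn_of_deriv_neg (convex_Ici a)
  · apply ContinuousOn.add
    · apply ContinuousOn.log
      · exact ContinuousOn.div continuousOn_id
          (continuousOn_id.add continuousOn_const)
          (fun x hx => by
            have hxa : a ≤ x := hx
            have : 0 < x + C := by linarith
            exact this.ne')
      · intro x hx
        have hxa : a ≤ x := hx
        have hx0 : 0 < x := lt_of_lt_of_le ha hxa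
        have hxC : 0 < x + C := by linarith
        exact (div_pos hx0 hxC).ne'
    · apply ContinuousOn.mul _ continuousOn_const
      exact ContinuousOn.div continuousOn_const
        (continuousOn_id.add continuousOn_const)
        (fun x hx => by
          have hxa : a ≤ x := hx
          have : 0 < x + C := by linarith
          exact this.ne')
  · intro x hx
    rw [interior_Ici] at hx
    have hxa : a < x := hx
    have hx0 : 0 < x := ha.trans hxa
    have hxC : 0 < x + C := by linarith
    have hu : HasDerivAt (fun x : ℝ => x / (x + C))
        ((1 * (x + C) - x * 1) / (x + C) ^ 2) x :=
      (hasDerivAt_id x).div ((hasDerivAt_id x).add_const C) hxC.ne'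
    have harg : x / (x + C) ≠ 0 := (div_pos hx0 hxC).ne'
    have h1 : HasDerivAt (fun x : ℝ => Real.log (x / (x + C)))
        (((1 * (x + C) - x * 1) / (x + C) ^ 2) / (x / (x + C))) x := hu.log harg
    have h2 : HasDerivAt (fun x : ℝ => (C / (x + C)) * Real.log C)
        (((0 * (x + C) - C * 1) / (x + C) ^ 2) * Real.log C) x :=
      ((hasDerivAt_const x C).div ((hasDerivAt_id x).add_const C) hxC.ne').mul_const _
    have hd : HasDerivAt (fun y : ℝ => Real.log (y / (y + C)) + (C / (y + C)) * Real.log C) _ x := h1.add h2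
    rw [hd.deriv]
    have heq : ((1 * (x + C) - x * 1) / (x + C) ^ 2) / (x / (x + C))
        + ((0 * (x + C) - C * 1) / (x + C) ^ 2) * Real.log C
        = C * ((x + C) - x * Real.log C) / (x * (x + C) ^ 2) := by
      field_simp
      ring
    rw [heq]
    have hnum : (x + C) - x * Real.log C < 0 := by
      have : C < x * (Real.log C - 1) := (div_lt_iff₀ (by linarith)).mp hxa
      nlinarith
    exact div_neg_of_neg_of_pos (mul_neg_of_pos_of_neg hC0 hnum) (by positivity)
end

section
/- Let C > e be a real number and let k be a real number with k ≥ C/(log C − 1) + 1. Define, for n ≥ 2, LS(C, n) = max{ log((n−1)/(n−1+C)) + (C/(n−1+C))·log C, log(n/(n+C)) + (C/(n+C))·log C, log(1 + exp(−H*(n))) } where H*(n) = log(n−1) − (log C)/(C−1) + log((log C)/(C−1)) + 1. Then for every n ≥ k, LS(C, n) ≤ LS(C, k). In particular, the global sensitivity of location entropy restricted to locations visited by at least k users equals the local sensitivity at n = k. -/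
/-- Local sensitivity of location entropy at a location visited by `n` users,
each contributing between `1` and `C` visits. -/
noncomputable def LS (C n : ℝ) : ℝ :=
  max (Real.log ((n - 1) / (n - 1 + C)) + (C / (n - 1 + C)) * Real.log C)
    (max (Real.log (n / (n + C)) + (C / (n + C)) * Real.log C)
      (Real.log (1 + Real.exp (-(Real.log (n - 1) - Real.log C / (C - 1)
        + Real.log (Real.log C / (C - 1)) + 1)))))

/-- For `C > e` and `k ≥ C/(log C − 1) + 1`, the local sensitivity `LS(C, n)` is
maximized over `n ≥ k` at `n = k`: the global sensitivity restricted to locations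
with at least `k` users equals the local sensitivity at `n = k`. -/
theorem LS_max_at_k (C : ℝ) (hC : Real.exp 1 < C) (k : ℝ)
    (hk : C / (Real.log C - 1) + 1 ≤ k) :
    (∀ n : ℝ, k ≤ n → LS C n ≤ LS C k) ∧
    IsGreatest (LS C '' Set.Ici k) (LS C k) := by
  have hC0 : (0:ℝ) < C := lt_trans (Real.exp_pos 1) hC
  have ht : 1 < Real.log C := by
    have h := Real.log_lt_log (Real.exp_pos 1) hC
    rwa [Real.log_exp] at h
  have hm0 : 0 < C / (Real.log C - 1) := div_pos hC0 (by linarith)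
  -- monotonicity of the entropy-change term
  have key : ∀ a b : ℝ, C / (Real.log C - 1) ≤ a → a ≤ b →
      Real.log (b / (b + C)) + (C / (b + C)) * Real.log C ≤
      Real.log (a / (a + C)) + (C / (a + C)) * Real.log C := by
    have hderiv : ∀ x : ℝ, C / (Real.log C - 1) ≤ x →
        HasDerivAt (fun m : ℝ => Real.log m - Real.log (m + C) + (C * Real.log C) / (m + C))
          (x⁻¹ - (x + C)⁻¹ * 1 + (C * Real.log C) * (-1 / (x + C) ^ 2)) x := by
      intro x hx
      have hx0 : 0 < x := lt_of_lt_of_le hm0 hx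
      have hxC : 0 < x + C := by linarith
      have h1 : HasDerivAt Real.log x⁻¹ x := Real.hasDerivAt_log hx0.ne'
      have h2 : HasDerivAt (fun m : ℝ => m + C) 1 x := (hasDerivAt_id x).add_const C
      have h3 : HasDerivAt (fun m : ℝ => Real.log (m + C)) ((x + C)⁻¹ * 1) x :=
        by have := (Real.hasDerivAt_log hxC.ne').comp x h2; exact this
      have h4 : HasDerivAt (fun m : ℝ => (m + C)⁻¹) (-1 / (x + C) ^ 2) x := by
        have := h2.inv hxC.ne'
        exact (by simpa using this : HasDerivAt (fun m : ℝ => m + C)⁻¹ (-1 / (x + C) ^ 2) x)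
      have h5 := (h1.sub h3).add (h4.const_mul (C * Real.log C))
      exact h5
    have gant : AntitoneOn
        (fun m : ℝ => Real.log m - Real.log (m + C) + (C * Real.log C) / (m + C))
        (Set.Ici (C / (Real.log C - 1))) := by
      apply antitoneOn_of_deriv_nonpos (convex_Ici _)
      · exact fun x hx => (hderiv x hx).continuousAt.continuousWithinAt
      · intro x hx
        rw [interior_Ici] at hx
        exact ((hderiv x (le_of_lt hx)).differentiableAt).differentiableWithinAt
      · intro x hx
        rw [interior_Ici] at hx
        have hx' := le_of_lt (Set.mem_Ioi.mp hx)
        rw [(hderiv x hx').deriv]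
        have hx0 : 0 < x := lt_of_lt_of_le hm0 hx'
        have hxC : 0 < x + C := by linarith
        have hkey : x + C ≤ Real.log C * x := by
          have h := (div_le_iff₀ (by linarith : (0:ℝ) < Real.log C - 1)).mp hx'
          nlinarith
        have e1 : x⁻¹ - (x + C)⁻¹ * 1 = C / (x * (x + C)) := by
          field_simp
          ring
        have e2 : C / (x * (x + C)) ≤ (C * Real.log C) / ((x + C) ^ 2) := by
          rw [div_le_div_iff₀ (by positivity) (by positivity)]
          nlinarith [mul_le_mul_of_nonneg_left hkey (le_of_lt (mul_pos hC0 hxC))]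
        have e3 : (C * Real.log C) * (-1 / (x + C) ^ 2)
            = -((C * Real.log C) / ((x + C) ^ 2)) := by ring
        rw [e3, e1]
        linarith
    intro a b ha hab
    have hb : C / (Real.log C - 1) ≤ b := le_trans ha hab
    have ha0 : 0 < a := lt_of_lt_of_le hm0 ha
    have hb0 : 0 < b := lt_of_lt_of_le hm0 hb
    have haC : 0 < a + C := by linarith
    have hbC : 0 < b + C := by linarith
    have h := gant ha hb hab
    have ea : Real.log (a / (a + C)) + (C / (a + C)) * Real.log C
        = Real.log a - Real.log (a + C) + (C * Real.log C) / (a + C) := by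
      rw [Real.log_div ha0.ne' haC.ne']
      ring
    have eb : Real.log (b / (b + C)) + (C / (b + C)) * Real.log C
        = Real.log b - Real.log (b + C) + (C * Real.log C) / (b + C) := by
      rw [Real.log_div hb0.ne' hbC.ne']
      ring
    rw [ea, eb]
    exact h
  have main : ∀ n : ℝ, k ≤ n → LS C n ≤ LS C k := by
    intro n hn
    have hk1 : (0:ℝ) < k - 1 := by linarith
    have hkm : C / (Real.log C - 1) ≤ k - 1 := by linarith
    have hkm' : C / (Real.log C - 1) ≤ k := by linarith
    unfold LS
    apply max_le
    · exact le_trans (key (k - 1) (n - 1) hkm (by linarith)) (le_max_left _ _)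
    · apply max_le
      · exact le_trans (key k n hkm' hn) (le_trans (le_max_left _ _) (le_max_right _ _))
      · refine le_trans ?_ (le_trans (le_max_right _ _) (le_max_right _ _))
        apply Real.log_le_log (by positivity)
        have hlog : Real.log (k - 1) ≤ Real.log (n - 1) :=
          Real.log_le_log hk1 (by linarith)
        have := Real.exp_le_exp.mpr
          (by linarith :
            -(Real.log (n - 1) - Real.log C / (C - 1)
              + Real.log (Real.log C / (C - 1)) + 1)
            ≤ -(Real.log (k - 1) - Real.log C / (C - 1)
              + Real.log (Real.log C / (C - 1)) + 1))
        linarith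
  refine ⟨main, ⟨⟨k, Set.self_mem_Ici, rfl⟩, ?_⟩⟩
  rintro y ⟨n, hn, rfl⟩
  exact main n hn
end

section
/- Let C > 1 be a real number, let n ≥ 1, and let c₁,…,c_n be real visit counts with 1 ≤ c_i ≤ C for all i. Then the location entropy satisfies H(c₁,…,c_n) ≥ log n − (log C)/(C−1) + log((log C)/(C−1)) + 1. -/
/-- Lower bound on the entropy of a location with `n` users whose visit counts
all lie in `[1, C]`: `H ≥ log n − log C/(C−1) + log(log C/(C−1)) + 1`. -/
theorem locEnt_lower_bound (C : ℝ) (hC : 1 < C) (n : ℕ) (hn : 1 ≤ n)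
    (c : Fin n → ℝ) (hc : ∀ i, 1 ≤ c i ∧ c i ≤ C) :
    Real.log n - Real.log C / (C - 1) + Real.log (Real.log C / (C - 1)) + 1 ≤
      locEnt n c := by
  have hC1 : (0:ℝ) < C - 1 := by linarith
  have hlogC : 0 < Real.log C := Real.log_pos hC
  set u := Real.log C / (C - 1) with hu
  have hu0 : 0 < u := div_pos hlogC hC1
  have huC : u * (C - 1) = Real.log C := div_mul_cancel₀ _ hC1.ne'
  set K := C * u with hK
  have hK0 : 0 < K := mul_pos (by linarith) hu0
  have hcpos : ∀ i, (0:ℝ) < c i := fun i => lt_of_lt_of_le one_pos (hc i).1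
  set S := ∑ j, c j with hS
  have hSn : (n:ℝ) ≤ S := by
    calc (n:ℝ) = ∑ _j : Fin n, (1:ℝ) := by simp
    _ ≤ S := Finset.sum_le_sum fun i _ => (hc i).1
  have hn1 : (1:ℝ) ≤ (n:ℝ) := by exact_mod_cast hn
  have hS0 : 0 < S := lt_of_lt_of_le (by linarith) hSn
  -- chord bound for x * log x on [1, C]
  have chord : ∀ i, c i * Real.log (c i) ≤ (c i - 1) * K := by
    intro i
    obtain ⟨h1, h2⟩ := hc i
    have ha : (0:ℝ) ≤ (C - c i) / (C - 1) := div_nonneg (by linarith) hC1.le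
    have hb : (0:ℝ) ≤ (c i - 1) / (C - 1) := div_nonneg (by linarith) hC1.le
    have hab : (C - c i) / (C - 1) + (c i - 1) / (C - 1) = 1 := by
      field_simp; ring
    have hx : (C - c i) / (C - 1) * 1 + (c i - 1) / (C - 1) * C = c i := by
      field_simp; ring
    have h := Real.convexOn_mul_log.2 (Set.mem_Ici.2 zero_le_one)
      (Set.mem_Ici.2 (by linarith : (0:ℝ) ≤ C)) ha hb hab
    simp only [smul_eq_mul] at h
    rw [hx] at h
    calc c i * Real.log (c i) ≤ (C - c i) / (C - 1) * (1 * Real.log 1)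
          + (c i - 1) / (C - 1) * (C * Real.log C) := h
      _ = (c i - 1) * K := by
          rw [Real.log_one]
          rw [hK, hu]
          field_simp
          ring
  -- entropy identity
  have hid : locEnt n c = Real.log S - (∑ i, c i * Real.log (c i)) / S := by
    unfold locEnt
    rw [← hS]
    have e : ∀ i ∈ Finset.univ, (c i / S) * Real.log (c i / S)
        = (c i * Real.log (c i)) / S - (c i / S) * Real.log S := by
      intro i _
      rw [Real.log_div (hcpos i).ne' hS0.ne']
      ring
    rw [Finset.sum_congr rfl e, Finset.sum_sub_distrib, ← Finset.sum_div,
      ← Finset.sum_mul, ← Finset.sum_div, ← hS, div_self hS0.ne']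
    ring
  -- sum bound
  have hsum : (∑ i, c i * Real.log (c i)) ≤ (S - n) * K := by
    calc (∑ i, c i * Real.log (c i)) ≤ ∑ i, (c i - 1) * K :=
          Finset.sum_le_sum fun i _ => chord i
      _ = (S - n) * K := by
          rw [← Finset.sum_mul, Finset.sum_sub_distrib, ← hS]
          simp
  have step1 : Real.log S + (n * K) / S - K ≤ locEnt n c := by
    rw [hid]
    have : (∑ i, c i * Real.log (c i)) / S ≤ (S - n) * K / S :=
      div_le_div_of_nonneg_right hsum hS0.le
    have h2 : (S - n) * K / S = K - (n * K) / S := by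
      field_simp
    rw [h2] at this
    linarith
  -- log S + nK/S ≥ log (nK) + 1
  have hnK0 : 0 < (n:ℝ) * K := mul_pos (by linarith) hK0
  have step2 : Real.log ((n:ℝ) * K) + 1 ≤ Real.log S + (n * K) / S := by
    have h := Real.log_le_sub_one_of_pos (div_pos hnK0 hS0)
    rw [Real.log_div hnK0.ne' hS0.ne'] at h
    linarith
  have hlognK : Real.log ((n:ℝ) * K) = Real.log n + Real.log C + Real.log u := by
    rw [Real.log_mul (by linarith : (n:ℝ) ≠ 0) hK0.ne', hK,
      Real.log_mul (by linarith : C ≠ 0) hu0.ne']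
    ring
  have : Real.log n - u + Real.log u + 1 ≤ locEnt n c := by
    have hKval : K = Real.log C + u := by rw [hK]; nlinarith [huC]
    nlinarith [step1, step2, hlognK]
  linarith [this]
end
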